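/- arXiv:1611.09423 — 2 statements merged into one kernel-verified Lean document; each statement's English description precedes it below -/
import Mathlib

section
/- Let t, a, b, c be integers with b ≥ 1 and 0 ≤ c ≤ b ≤ a ≤ t−1. Then the number of pairs of sequences (ℓ, u), where ℓ = (ℓ_1, …, ℓ_b) is a sequence of positive integers summing to t−a having exactly c entries that are at least 2 (equivalently, exactly b−c entries equal to 1), and u = (u_1, …, u_b) is a sequence of positive integers summing to a, equals (b·ξ_t(a,b,c)/a)·C(a,b)·C(b,c)·C(t−a−b, c), where ξ_t(a,b,c) = c/(t−a−b) if a+b < t and ξ_t(a,b,c) = 1 if a+b ≥ t. -/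
/-!
Subtracting `1` from every part turns compositions of `a` into `b` positive parts into weak
compositions of `a - b`, which stars and bars counts as `multichoose b (a - b) = (b / a) C(a, b)`.
For `ℓ`, the entries `≥ 2` form a `c`-subset `S`, and subtracting `1 + [i ∈ S]` leaves a weak
composition of `s - c` supported on `S`, where `s = t - a - b`; there are
`C(b, c) multichoose c (s - c) = C(b, c) (c / s) C(s, c)` of them, the factor `ξ` of the
statement absorbing the degenerate case `s = 0`.
-/

/-- Binomial coefficient `C(p,q)` with the conventions `C(0,0)=1` and
`C(p,q)=0` whenever `q < 0` or `q > p`. -/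
def intChoose (p q : ℤ) : ℤ :=
  if 0 ≤ q ∧ q ≤ p then (p.toNat).choose q.toNat else 0

open Finset

theorem intChoose_natCast (p q : ℕ) : intChoose p q = p.choose q := by
  rw [intChoose]
  split_ifs with h
  · simp
  · rw [Nat.choose_eq_zero_of_lt (by omega), Nat.cast_zero]

theorem intChoose_eq_zero_of_lt {p q : ℤ} (h : p < q) : intChoose p q = 0 :=
  if_neg fun hpq => not_le.2 h hpq.2

theorem Nat.add_mul_multichoose (n k : ℕ) :
    (n + k) * k.multichoose n = k * (n + k).choose k := by
  rcases k with _ | k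
  · cases n <;> simp [Nat.multichoose_zero_succ]
  · rw [Nat.multichoose_eq, show k + 1 + n - 1 = n + k by omega, @Nat.choose_symm_add n k,
      ← add_assoc, Nat.add_one_mul_choose_eq, mul_comm]

namespace Finset

variable {ι : Type*} [DecidableEq ι]

theorem card_piAntidiag_nat (s : Finset ι) (n : ℕ) : #(piAntidiag s n) = (#s).multichoose n := by
  rw [← card_finsuppAntidiag_nat_eq_multichoose, finsuppAntidiag, card_map, card_attach]

variable [Fintype ι]

theorem card_filter_le_piAntidiag_univ (s : Finset ι) (r : ι → ℕ) (m : ℕ) :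
    #{f ∈ piAntidiag (univ : Finset ι) m | (∀ i, r i ≤ f i) ∧ ∀ i ∉ s, f i = r i} =
      if ∑ i, r i ≤ m then (#s).multichoose (m - ∑ i, r i) else 0 := by
  split_ifs with h
  · obtain ⟨n, rfl⟩ := Nat.exists_eq_add_of_le' h
    rw [Nat.add_sub_cancel, ← card_piAntidiag_nat s n]
    refine card_nbij' (· - r) (· + r) ?_ ?_ ?_ ?_
    · intro f hf
      obtain ⟨hf, hrf, hfs⟩ := mem_filter.1 hf
      have hsupp : ∀ i ∉ s, (f - r) i = 0 := fun i hi => by simp [hfs i hi]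
      refine mem_piAntidiag.2 ⟨?_, fun i hi => by_contra fun h => hi (hsupp i h)⟩
      rw [sum_subset (subset_univ s) fun i _ => hsupp i, Pi.sub_def,
        sum_tsub_distrib _ fun i _ => hrf i, (mem_piAntidiag.1 hf).1, Nat.add_sub_cancel]
    · intro g hg
      rw [mem_coe, mem_piAntidiag] at hg
      have hsupp : ∀ i ∉ s, g i = 0 := fun i hi => by_contra fun h => hi (hg.2 i h)
      refine mem_filter.2
        ⟨mem_piAntidiag.2 ⟨?_, by simp⟩, fun i => by simp, fun i hi => by simp [hsupp i hi]⟩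
      change ∑ i, (g i + r i) = _
      rw [sum_add_distrib, ← sum_subset (subset_univ s) fun i _ => hsupp i, hg.1]
    · intro f hf
      exact tsub_add_cancel_of_le (mem_filter.1 hf).2.1
    · intro g _
      exact add_tsub_cancel_right g r
  · rw [card_eq_zero, filter_eq_empty_iff]
    rintro f hf ⟨hrf, -⟩
    rw [mem_piAntidiag] at hf
    exact h (hf.1 ▸ sum_le_sum fun i _ => hrf i)

theorem mul_card_filter_one_le_piAntidiag_univ (m : ℕ) :
    m * #{u ∈ piAntidiag (univ : Finset ι) m | ∀ i, 1 ≤ u i} =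
      Fintype.card ι * m.choose (Fintype.card ι) := by
  have hU : {u ∈ piAntidiag (univ : Finset ι) m | ∀ i, 1 ≤ u i} =
      {f ∈ piAntidiag (univ : Finset ι) m | (∀ i, 1 ≤ f i) ∧ ∀ i ∉ univ, f i = 1} := by
    simp
  rw [hU, card_filter_le_piAntidiag_univ univ (fun _ => 1), card_univ, sum_const, card_univ, smul_eq_mul, mul_one]
  split_ifs with h
  · obtain ⟨n, rfl⟩ := Nat.exists_eq_add_of_le' h
    rw [Nat.add_sub_cancel, Nat.add_mul_multichoose]
  · rw [Nat.choose_eq_zero_of_lt (not_le.1 h), mul_zero, mul_zero]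

theorem card_filter_card_two_le_piAntidiag_univ (c m : ℕ) :
    #{ℓ ∈ piAntidiag (univ : Finset ι) m | (∀ i, 1 ≤ ℓ i) ∧ #{i | 2 ≤ ℓ i} = c} =
      (Fintype.card ι).choose c *
        if Fintype.card ι + c ≤ m then c.multichoose (m - (Fintype.card ι + c)) else 0 := by
  rw [card_eq_sum_card_fiberwise (f := fun ℓ => ({i | 2 ≤ ℓ i} : Finset ι))
    (t := powersetCard c univ) fun ℓ hℓ => mem_powersetCard_univ.2 (mem_filter.1 hℓ).2.2,
    sum_const_nat fun S hS => ?_, card_powersetCard, card_univ]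
  rw [mem_powersetCard_univ] at hS
  have hr : ∑ i, (1 + if i ∈ S then 1 else 0) = Fintype.card ι + c := by
    simp [sum_add_distrib, hS]
  rw [← hr, ← hS, ← card_filter_le_piAntidiag_univ, filter_filter]
  congr 1
  refine filter_congr fun ℓ _ => ⟨?_, ?_⟩
  · rintro ⟨⟨hpos, -⟩, rfl⟩
    refine ⟨fun i => ?_, fun i hi => ?_⟩
    · by_cases hi : 2 ≤ ℓ i <;> simp [hi, hpos i]
    · rw [mem_filter_univ] at hi
      rw [if_neg (by rwa [mem_filter_univ])]
      have := hpos i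
      omega
  · rintro ⟨hr, hout⟩
    have hfib : ({i | 2 ≤ ℓ i} : Finset ι) = S := by
      ext i
      rw [mem_filter_univ]
      by_cases hi : i ∈ S
      · simpa [hi] using hr i
      · simp [hi, hout i hi]
    exact ⟨⟨fun i => le_trans (by simp) (hr i), by rw [hfib]⟩, hfib⟩

theorem cast_card_filter_card_two_le_piAntidiag_univ (c m : ℕ) :
    (#{ℓ ∈ piAntidiag (univ : Finset ι) m | (∀ i, 1 ≤ ℓ i) ∧ #{i | 2 ≤ ℓ i} = c} : ℚ) =
      (Fintype.card ι).choose c *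
        (if Fintype.card ι < m then (c : ℚ) / (m - Fintype.card ι) else 1) *
        intChoose (m - Fintype.card ι) c := by
  rw [card_filter_card_two_le_piAntidiag_univ]
  set k := Fintype.card ι
  by_cases h : k + c ≤ m
  · obtain ⟨n, rfl⟩ := Nat.exists_eq_add_of_le' h
    rw [if_pos h, Nat.add_sub_cancel, show ((n + (k + c) : ℕ) : ℤ) - k = ((n + c : ℕ) : ℤ) by
      push_cast; ring, intChoose_natCast]
    split_ifs with hkm
    · have hmk : ((n + (k + c) : ℕ) : ℚ) - k = n + c := by push_cast; ring
      have hnc : ((n + c : ℕ) : ℚ) * c.multichoose n = c * (n + c).choose c := by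
        exact_mod_cast Nat.add_mul_multichoose n c
      have hnc0 : (n : ℚ) + c ≠ 0 := by exact_mod_cast (show n + c ≠ 0 by omega)
      rw [hmk]
      push_cast at hnc ⊢
      field_simp
      linear_combination (k.choose c : ℚ) * hnc
    · obtain ⟨rfl, rfl⟩ : n = 0 ∧ c = 0 := by omega
      simp
  · rw [if_neg h, intChoose_eq_zero_of_lt (by omega)]
    simp

theorem natCard_subtype_eq_card_filter_mul_card_filter (c m a : ℕ) :
    Nat.card {p : (ι → ℕ) × (ι → ℕ) //
        (∀ i, 1 ≤ p.1 i) ∧ (∑ i, p.1 i) = m ∧ #{i | 2 ≤ p.1 i} = c ∧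
        (∀ i, 1 ≤ p.2 i) ∧ (∑ i, p.2 i) = a} =
      #{ℓ ∈ piAntidiag (univ : Finset ι) m | (∀ i, 1 ≤ ℓ i) ∧ #{i | 2 ≤ ℓ i} = c} *
        #{u ∈ piAntidiag (univ : Finset ι) a | ∀ i, 1 ≤ u i} := by
  rw [← card_product, ← Nat.card_eq_finsetCard]
  refine Nat.card_congr (Equiv.subtypeEquivRight fun p => ?_)
  simp only [mem_product, mem_filter, mem_piAntidiag, ne_eq, mem_univ, implies_true, and_true]
  tauto

end Finset

theorem stmt_1_general (t a b c : ℕ) (hb : 1 ≤ b) (hba : b ≤ a) (hat : a < t) :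
    (Nat.card {p : (Fin b → ℕ) × (Fin b → ℕ) //
        (∀ i, 1 ≤ p.1 i) ∧ (∑ i, p.1 i) = t - a ∧
        (Finset.univ.filter (fun i => 2 ≤ p.1 i)).card = c ∧
        (∀ i, 1 ≤ p.2 i) ∧ (∑ i, p.2 i) = a} : ℚ) =
      ((b : ℚ) * (if a + b < t then (c : ℚ) / ((t : ℚ) - a - b) else 1) / (a : ℚ)) *
        (intChoose (a : ℤ) (b : ℤ) : ℚ) * (intChoose (b : ℤ) (c : ℤ) : ℚ) *
        (intChoose ((t : ℤ) - a - b) (c : ℤ) : ℚ) := by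
  obtain ⟨m, rfl⟩ := Nat.exists_eq_add_of_le hat.le
  have hU := congrArg (Nat.cast : ℕ → ℚ) (mul_card_filter_one_le_piAntidiag_univ (ι := Fin b) a)
  rw [Nat.add_sub_cancel_left, natCard_subtype_eq_card_filter_mul_card_filter, Nat.cast_mul,
    cast_card_filter_card_two_le_piAntidiag_univ]
  push_cast [Fintype.card_fin] at hU ⊢
  rw [intChoose_natCast, intChoose_natCast, show (a : ℤ) + m - a - b = m - b by ring,
    show (a : ℚ) + m - a - b = m - b by ring]
  simp only [Nat.add_lt_add_iff_left]
  have ha : (a : ℚ) ≠ 0 := Nat.cast_ne_zero.2 (by omega)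
  field_simp
  linear_combination
    (b.choose c : ℚ) * (if b < m then (c : ℚ) / (m - b) else 1) * intChoose (m - b) c * hU

/-- The number of pairs of sequences `(ℓ, u)`, where `ℓ = (ℓ_1, …, ℓ_b)` is a sequence of
positive integers summing to `t−a` with exactly `c` entries at least `2`, and
`u = (u_1, …, u_b)` is a sequence of positive integers summing to `a`, equals
`(b·ξ_t(a,b,c)/a)·C(a,b)·C(b,c)·C(t−a−b, c)` where `ξ_t(a,b,c) = c/(t−a−b)` if `a+b < t`
and `ξ_t(a,b,c) = 1` if `a+b ≥ t`. -/
theorem stmt_1 (t a b c : ℕ) (hb : 1 ≤ b) (hcb : c ≤ b) (hba : b ≤ a) (hat : a < t) :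
    (Nat.card {p : (Fin b → ℕ) × (Fin b → ℕ) //
        (∀ i, 1 ≤ p.1 i) ∧ (∑ i, p.1 i) = t - a ∧
        (Finset.univ.filter (fun i => 2 ≤ p.1 i)).card = c ∧
        (∀ i, 1 ≤ p.2 i) ∧ (∑ i, p.2 i) = a} : ℚ) =
      ((b : ℚ) * (if a + b < t then (c : ℚ) / ((t : ℚ) - a - b) else 1) / (a : ℚ)) *
        (intChoose (a : ℤ) (b : ℤ) : ℚ) * (intChoose (b : ℤ) (c : ℤ) : ℚ) *
        (intChoose ((t : ℤ) - a - b) (c : ℤ) : ℚ) :=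
  stmt_1_general t a b c hb hba hat
end

section
/- Let r and s be integers with s ≥ 3 and r ≥ s+1. Then α_1 = 0, the function τ ↦ α_τ is strictly increasing and differentiable on [1, ∞), and as τ → ∞ one has α_τ → 1, β_τ → 0, γ_τ → 0, and δ_τ → δ_∞ := 1/( 1 + (s−3)/(2κ_4) + √( (s−2)/κ_4 + (s−3)²/(4κ_4²) ) ), which lies in the open interval (0,1). -/
noncomputable section

/-- `g(x) = x·ln x` (note `g(0) = 0` automatically, since `Real.log 0 = 0`). -/
def xlog (x : ℝ) : ℝ := x * Real.log x

/-- `h(r,s) = (r−2)² + 2(s−2)(r−1)(r−2) + (1/2)(s−2)(s−3)(r−1)²`. -/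
def hRS (r s : ℝ) : ℝ :=
  (r - 2) ^ 2 + 2 * (s - 2) * (r - 1) * (r - 2) + (1 / 2) * (s - 2) * (s - 3) * (r - 1) ^ 2

/-- `κ₁ = (r−1)^{s−2}(r−2)²(s−1)(s−2)^{2(s−2)}` (real exponents, via `rpow`). -/
def kap1 (r s : ℝ) : ℝ := (r - 1) ^ (s - 2) * (r - 2) ^ 2 * (s - 1) * (s - 2) ^ (2 * (s - 2))

/-- `κ₂ = 2h(r,s)/(r−2)²`. -/
def kap2 (r s : ℝ) : ℝ := 2 * hRS r s / (r - 2) ^ 2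

/-- `κ₃ = (rs−r−s)²/h(r,s)`. -/
def kap3 (r s : ℝ) : ℝ := (r * s - r - s) ^ 2 / hRS r s

/-- `κ₄ = (r−3)/(r−2)`. -/
def kap4 (r : ℝ) : ℝ := (r - 3) / (r - 2)

/-- The function `φ` of four real variables `(α,β,γ,δ)` (with parameters `r,s`). -/
def phiRS (r s α β γ δ : ℝ) : ℝ :=
  xlog (1 - α - β) + 2 * (s - 1) * xlog α + ((s - 1) / s) * xlog (r * s - r - s - s * α)
    - xlog (β - γ) - xlog δ - 2 * xlog γ - 2 * xlog (α - β - δ)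
    - xlog ((s - 3) * α + β + δ) - xlog (1 - α - β - γ)
    + α * Real.log (kap1 r s) + β * Real.log (kap2 r s) + γ * Real.log (kap3 r s)
    + δ * Real.log (kap4 r)

/-- Membership in the domain `K = {(α,β,γ,δ) : 0 ≤ γ ≤ β, 0 ≤ δ ≤ α−β, α+β+γ ≤ 1}`. -/
def memK (α β γ δ : ℝ) : Prop :=
  0 ≤ γ ∧ γ ≤ β ∧ 0 ≤ δ ∧ δ ≤ α - β ∧ α + β + γ ≤ 1

/-- `L(r,s) = ln(r−1) + ln(s−1) + ((s−1)(rs−r−s)/s)·ln(1 − s/(rs−r))`;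
the hypothesis `r > ρ(s)` means `r ≥ s+1` and `L(r,s) > 0`. -/
def Lfun (r s : ℝ) : ℝ :=
  Real.log (r - 1) + Real.log (s - 1) +
    ((s - 1) * (r * s - r - s) / s) * Real.log (1 - s / (r * s - r))

end

noncomputable section

/-- `D_τ = (τ−1)² + 2κ₃τ − κ₃`. -/
def DT (r s τ : ℝ) : ℝ := (τ - 1) ^ 2 + 2 * kap3 r s * τ - kap3 r s

/-- `p_τ = ((τ−1)² + κ₃(τ−1))/D_τ`. -/
def pT (r s τ : ℝ) : ℝ := ((τ - 1) ^ 2 + kap3 r s * (τ - 1)) / DT r s τ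

/-- `q_τ = κ₄·τ·(τ−1)²/(κ₂·D_τ)`. -/
def qT (r s τ : ℝ) : ℝ := kap4 r * τ * (τ - 1) ^ 2 / (kap2 r s * DT r s τ)

/-- `N_τ = p_τ + q_τ + ((s−3)/(2κ₄))q_τ + √((s−2)/κ₄·q_τ(p_τ+q_τ) + (s−3)²/(4κ₄²)·q_τ²)`. -/
def NT (r s τ : ℝ) : ℝ :=
  pT r s τ + qT r s τ + ((s - 3) / (2 * kap4 r)) * qT r s τ +
    Real.sqrt (((s - 2) / kap4 r) * qT r s τ * (pT r s τ + qT r s τ) +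
      ((s - 3) ^ 2 / (4 * (kap4 r) ^ 2)) * (qT r s τ) ^ 2)

/-- `α_τ = N_τ/(1+N_τ)`. -/
def alphaT (r s τ : ℝ) : ℝ := NT r s τ / (1 + NT r s τ)

/-- `β_τ = p_τ(1−α_τ)`. -/
def betaT (r s τ : ℝ) : ℝ := pT r s τ * (1 - alphaT r s τ)

/-- `γ_τ = (κ₃(τ−1)/D_τ)(1−α_τ)`. -/
def gammaT (r s τ : ℝ) : ℝ := (kap3 r s * (τ - 1) / DT r s τ) * (1 - alphaT r s τ)

/-- `δ_τ = q_τ(1−α_τ)`. -/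
def deltaT (r s τ : ℝ) : ℝ := qT r s τ * (1 - alphaT r s τ)

end

/-!
On `[1, ∞)` write `N_τ = F(p_τ, q_τ)` with `F(p, q) = p + (1 + c) q + √(a q (p + q) + b q²)`,
`a = (s−2)/κ₄`, `b = (s−3)²/(4κ₄²)`, `c = (s−3)/(2κ₄)`; `F` is increasing in both arguments.
Both `p_τ` and `q_τ` increase and `p_1 = q_1 = 0`, so `α_τ = N_τ/(1 + N_τ)` increases from `0`.
As `τ → ∞`, `(τ−1)²/D_τ → 1`, hence `p_τ → 1`, `κ₃(τ−1)/D_τ → 0` and `q_τ ~ (κ₄/κ₂) τ → ∞`;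
since `1 − α_τ = 1/(1 + N_τ)` and `(1 + N_τ)/q_τ → 1 + c + √(a + b)`, this gives all four limits.
The only delicate point is differentiability at `τ = 1`, where the radicand vanishes: it is
`(τ−1)² Y(τ)` with `Y` continuous, so on `[1, ∞)` its square root is `(τ−1)√Y(τ)`, which
has a right derivative at `1`.
-/

open Filter Topology Set

lemma hasDerivAt_sub_mul {g : ℝ → ℝ} {x : ℝ} (hg : ContinuousAt g x) :
    HasDerivAt (fun t => (t - x) * g t) (g x) x := by
  rw [hasDerivAt_iff_tendsto_slope]
  refine (hg.tendsto.mono_left nhdsWithin_le_nhds).congr' ?_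
  filter_upwards [self_mem_nhdsWithin] with t ht
  rw [slope_def_field, sub_self, zero_mul, sub_zero, mul_div_cancel_left₀ _ (sub_ne_zero.2 ht)]

lemma differentiableWithinAt_sqrt_of_eq_sq_mul {f g : ℝ → ℝ} {x : ℝ} (hg : ContinuousAt g x)
    (hfg : ∀ t, f t = (t - x) ^ 2 * g t) :
    DifferentiableWithinAt ℝ (fun t => √(f t)) (Ici x) x := by
  refine (hasDerivAt_sub_mul hg.sqrt).differentiableAt.differentiableWithinAt.congr
    (fun t ht => ?_) (by simp [hfg])
  rw [hfg, Real.sqrt_mul (sq_nonneg _), Real.sqrt_sq (sub_nonneg.2 ht)]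

lemma tendsto_inv_sub_one : Tendsto (fun τ : ℝ => (τ - 1)⁻¹) atTop (𝓝 0) :=
  (tendsto_atTop_add_const_right _ (-1) tendsto_id).inv_tendsto_atTop

section RootSum

noncomputable def rootSum (a b c p q : ℝ) : ℝ := p + q + c * q + √(a * q * (p + q) + b * q ^ 2)

variable {a b c : ℝ}

lemma le_rootSum (hc : 0 ≤ c) {p q : ℝ} (hp : 0 ≤ p) (hq : 0 ≤ q) : q ≤ rootSum a b c p q := by
  have := Real.sqrt_nonneg (a * q * (p + q) + b * q ^ 2)
  unfold rootSum
  nlinarith [mul_nonneg hc hq]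

lemma rootSum_lt_rootSum (ha : 0 ≤ a) (hb : 0 ≤ b) (hc : 0 ≤ c) {p p' q q' : ℝ}
    (hp : 0 ≤ p) (hq : 0 ≤ q) (hpp' : p < p') (hqq' : q ≤ q') :
    rootSum a b c p q < rootSum a b c p' q' := by
  have hrad : a * q * (p + q) + b * q ^ 2 ≤ a * q' * (p' + q') + b * q' ^ 2 := by
    have hq' : 0 ≤ q' := hq.trans hqq'
    gcongr
  have := Real.sqrt_le_sqrt hrad
  unfold rootSum
  nlinarith [mul_le_mul_of_nonneg_left hqq' hc]

lemma tendsto_div_one_add_rootSum {ι : Type*} {l : Filter ι} {p q : ι → ℝ} {p₀ : ℝ}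
    (hc : 0 ≤ c) (hp : Tendsto p l (𝓝 p₀)) (hq : Tendsto q l atTop) :
    Tendsto (fun i => q i / (1 + rootSum a b c (p i) (q i))) l
      (𝓝 (1 / (1 + c + √(a + b)))) := by
  have hq₀ := hq.inv_tendsto_atTop
  have hpq : Tendsto (fun i => p i * (q i)⁻¹) l (𝓝 0) := by simpa using hp.mul hq₀
  have hlim : Tendsto (fun i => (q i)⁻¹ + p i * (q i)⁻¹ + 1 + c + √(a * (p i * (q i)⁻¹) + a + b))
      l (𝓝 (1 + c + √(a + b))) := by
    have := (((hq₀.add hpq).add_const 1).add_const c).add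
      ((((hpq.const_mul a).add_const a).add_const b).sqrt)
    simpa using this
  have hpos : 0 < 1 + c + √(a + b) := by have := Real.sqrt_nonneg (a + b); linarith
  rw [one_div]
  refine (hlim.inv₀ hpos.ne').congr' ?_
  filter_upwards [hq.eventually_gt_atTop 0] with i hi
  have hsqrt : √(a * q i * (p i + q i) + b * q i ^ 2) = q i * √(a * (p i * (q i)⁻¹) + a + b) := by
    have hrad : a * q i * (p i + q i) + b * q i ^ 2 = q i ^ 2 * (a * (p i * (q i)⁻¹) + a + b) := by
      field_simp
    rw [hrad, Real.sqrt_mul (sq_nonneg _), Real.sqrt_sq hi.le]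
  rw [rootSum, hsqrt]
  field_simp
  ring

end RootSum

section

variable {r s : ℝ}

lemma hRS_pos (hs : 3 ≤ s) (hr : s + 1 ≤ r) : 0 < hRS r s := by
  have h1 : 0 ≤ (s - 2) * (r - 1) * (r - 2) := by
    apply mul_nonneg (mul_nonneg _ _) _ <;> linarith
  have h2 : 0 ≤ (s - 2) * (s - 3) * (r - 1) ^ 2 := by
    apply mul_nonneg (mul_nonneg _ _) (sq_nonneg _) <;> linarith
  have h3 : 0 < (r - 2) ^ 2 := by nlinarith
  unfold hRS
  linarith

lemma kap2_pos (hs : 3 ≤ s) (hr : s + 1 ≤ r) : 0 < kap2 r s := by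
  have := hRS_pos hs hr
  have : (r - 2) ^ 2 ≠ 0 := by nlinarith
  unfold kap2
  positivity

lemma kap3_pos (hs : 3 ≤ s) (hr : s + 1 ≤ r) : 0 < kap3 r s := by
  have := hRS_pos hs hr
  have : r * s - r - s ≠ 0 := by nlinarith
  unfold kap3
  positivity

lemma kap4_pos (hr : 3 < r) : 0 < kap4 r :=
  div_pos (by linarith) (by linarith)

lemma DT_pos (hk3 : 0 < kap3 r s) {τ : ℝ} (hτ : 1 ≤ τ) : 0 < DT r s τ := by
  unfold DT
  nlinarith [sq_nonneg (τ - 1)]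

lemma pT_nonneg (hk3 : 0 < kap3 r s) {τ : ℝ} (hτ : 1 ≤ τ) : 0 ≤ pT r s τ := by
  have := DT_pos hk3 hτ
  have : 0 ≤ τ - 1 := by linarith
  unfold pT
  positivity

lemma qT_eq (τ : ℝ) : qT r s τ = kap4 r / kap2 r s * τ * ((τ - 1) ^ 2 / DT r s τ) := by
  unfold qT
  ring

lemma qT_pos (hk2 : 0 < kap2 r s) (hk3 : 0 < kap3 r s) (hk4 : 0 < kap4 r) {τ : ℝ} (hτ : 1 < τ) :
    0 < qT r s τ := by
  have := DT_pos hk3 hτ.le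
  have : τ - 1 ≠ 0 := by linarith
  have : 0 < τ := by linarith
  rw [qT_eq]
  positivity

lemma qT_nonneg (hk2 : 0 < kap2 r s) (hk3 : 0 < kap3 r s) (hk4 : 0 < kap4 r) {τ : ℝ}
    (hτ : 1 ≤ τ) : 0 ≤ qT r s τ := by
  rcases hτ.eq_or_lt with rfl | hτ
  · simp [qT]
  · exact (qT_pos hk2 hk3 hk4 hτ).le

lemma pT_strictMonoOn (hk3 : 0 < kap3 r s) : StrictMonoOn (pT r s) (Ici 1) := by
  rintro x (hx : 1 ≤ x) y (hy : 1 ≤ y) hxy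
  have hDx := DT_pos hk3 hx
  have hDy := DT_pos hk3 hy
  -- `1 - p_τ = κ₃ τ / D_τ`, and `x D_y - y D_x = (y - x)(x y - 1 + κ₃)`
  have key : 0 < (y - x) * (x * y - 1 + kap3 r s) := by
    apply mul_pos (by linarith)
    nlinarith [mul_le_mul hx hy zero_le_one (by linarith : (0 : ℝ) ≤ x)]
  unfold pT
  rw [div_lt_div_iff₀ hDx hDy]
  unfold DT
  nlinarith

lemma sq_div_DT_monotoneOn (hk3 : 0 < kap3 r s) :
    MonotoneOn (fun τ => (τ - 1) ^ 2 / DT r s τ) (Ici 1) := by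
  rintro x (hx : 1 ≤ x) y (hy : 1 ≤ y) hxy
  have hu : 0 ≤ x - 1 := sub_nonneg.2 hx
  have huv : 0 ≤ (y - 1) - (x - 1) := by linarith
  simp only
  rw [div_le_div_iff₀ (DT_pos hk3 hx) (DT_pos hk3 hy)]
  unfold DT
  nlinarith [mul_nonneg (mul_nonneg (mul_nonneg hk3.le hu) (hu.trans (by linarith))) huv,
    mul_nonneg hk3.le (mul_nonneg huv (by linarith : (0 : ℝ) ≤ (y - 1) + (x - 1)))]

lemma qT_strictMonoOn (hk2 : 0 < kap2 r s) (hk3 : 0 < kap3 r s) (hk4 : 0 < kap4 r) :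
    StrictMonoOn (qT r s) (Ici 1) := by
  rintro x (hx : 1 ≤ x) y (hy : 1 ≤ y) hxy
  have hgy : 0 < (y - 1) ^ 2 / DT r s y := by
    have := DT_pos hk3 hy
    have : y - 1 ≠ 0 := by linarith
    positivity
  rw [qT_eq, qT_eq, mul_assoc, mul_assoc]
  gcongr (kap4 r / kap2 r s) * ?_
  exact (mul_le_mul_of_nonneg_left (sq_div_DT_monotoneOn hk3 hx hy hxy.le) (by linarith)).trans_lt
    (mul_lt_mul_of_pos_right hxy hgy)

lemma NT_eq_rootSum : NT r s = fun τ => rootSum ((s - 2) / kap4 r)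
    ((s - 3) ^ 2 / (4 * kap4 r ^ 2)) ((s - 3) / (2 * kap4 r)) (pT r s τ) (qT r s τ) :=
  rfl

lemma NT_nonneg (hs : 3 ≤ s) (hk2 : 0 < kap2 r s) (hk3 : 0 < kap3 r s) (hk4 : 0 < kap4 r)
    {τ : ℝ} (hτ : 1 ≤ τ) : 0 ≤ NT r s τ := by
  have hq := qT_nonneg hk2 hk3 hk4 hτ
  have hc : 0 ≤ (s - 3) / (2 * kap4 r) := div_nonneg (by linarith) (by positivity)
  rw [NT_eq_rootSum]
  exact hq.trans (le_rootSum hc (pT_nonneg hk3 hτ) hq)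

lemma alphaT_strictMonoOn (hs : 3 ≤ s) (hk2 : 0 < kap2 r s) (hk3 : 0 < kap3 r s)
    (hk4 : 0 < kap4 r) : StrictMonoOn (alphaT r s) (Ici 1) := by
  intro x hx y hy hxy
  have hNx := NT_nonneg hs hk2 hk3 hk4 hx
  have hNy := NT_nonneg hs hk2 hk3 hk4 hy
  have hN : NT r s x < NT r s y := by
    have ha : 0 ≤ (s - 2) / kap4 r := div_nonneg (by linarith) hk4.le
    have hc : 0 ≤ (s - 3) / (2 * kap4 r) := div_nonneg (by linarith) (by positivity)
    rw [NT_eq_rootSum]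
    exact rootSum_lt_rootSum ha (by positivity) hc
      (pT_nonneg hk3 hx) (qT_nonneg hk2 hk3 hk4 hx) (pT_strictMonoOn hk3 hx hy hxy)
      (qT_strictMonoOn hk2 hk3 hk4 hx hy hxy).le
  unfold alphaT
  rw [div_lt_div_iff₀ (by linarith) (by linarith)]
  linarith

lemma alphaT_one : alphaT r s 1 = 0 := by
  norm_num [alphaT, NT, pT, qT]

lemma differentiableAt_pT (hk3 : 0 < kap3 r s) {τ : ℝ} (hτ : 1 ≤ τ) :
    DifferentiableAt ℝ (pT r s) τ := by
  have hD := (DT_pos hk3 hτ).ne'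
  unfold DT at hD
  show DifferentiableAt ℝ (fun τ => pT r s τ) τ
  simp only [pT, DT]
  fun_prop (disch := exact hD)

lemma differentiableAt_qT (hk2 : 0 < kap2 r s) (hk3 : 0 < kap3 r s) {τ : ℝ} (hτ : 1 ≤ τ) :
    DifferentiableAt ℝ (qT r s) τ := by
  have hD := (mul_pos hk2 (DT_pos hk3 hτ)).ne'
  unfold DT at hD
  show DifferentiableAt ℝ (fun τ => qT r s τ) τ
  simp only [qT, DT]
  fun_prop (disch := exact hD)

lemma differentiableOn_NT (hs : 3 ≤ s) (hk2 : 0 < kap2 r s) (hk3 : 0 < kap3 r s)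
    (hk4 : 0 < kap4 r) : DifferentiableOn ℝ (NT r s) (Ici 1) := by
  rintro τ (hτ : 1 ≤ τ)
  have hp := differentiableAt_pT hk3 hτ
  have hq := differentiableAt_qT hk2 hk3 hτ
  refine ((hp.add hq).add (hq.const_mul _)).differentiableWithinAt.add ?_
  rcases hτ.eq_or_lt with rfl | hτ
  · -- `q_t = (t - 1)² w_t`, so the radicand is `(t - 1)² w_t (a (p_t + q_t) + b q_t)`
    have hw : ContinuousAt (fun t => kap4 r * t / (kap2 r s * DT r s t)) 1 := by
      have hD := (mul_pos hk2 (DT_pos hk3 le_rfl)).ne'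
      unfold DT at hD ⊢
      fun_prop (disch := exact hD)
    refine differentiableWithinAt_sqrt_of_eq_sq_mul (hw.mul
      ((hp.continuousAt.add hq.continuousAt).const_mul ((s - 2) / kap4 r) |>.add
        (hq.continuousAt.const_mul ((s - 3) ^ 2 / (4 * kap4 r ^ 2))))) fun t => ?_
    have hqt : qT r s t = (t - 1) ^ 2 * (kap4 r * t / (kap2 r s * DT r s t)) := by
      unfold qT
      ring
    simp only [Pi.mul_apply, Pi.add_apply]
    linear_combination ((s - 2) / kap4 r * (pT r s t + qT r s t) +
      (s - 3) ^ 2 / (4 * kap4 r ^ 2) * qT r s t) * hqt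
  · have ha : 0 < (s - 2) / kap4 r := div_pos (by linarith) hk4
    have hq₀ := qT_pos hk2 hk3 hk4 hτ
    have hp₀ := pT_nonneg hk3 hτ.le
    have hrad : (s - 2) / kap4 r * qT r s τ * (pT r s τ + qT r s τ) +
        (s - 3) ^ 2 / (4 * kap4 r ^ 2) * qT r s τ ^ 2 ≠ 0 := by positivity
    exact (((hq.const_mul _).mul (hp.add hq)).add ((hq.pow 2).const_mul _)).sqrt hrad
      |>.differentiableWithinAt

lemma differentiableOn_alphaT (hs : 3 ≤ s) (hk2 : 0 < kap2 r s) (hk3 : 0 < kap3 r s)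
    (hk4 : 0 < kap4 r) : DifferentiableOn ℝ (alphaT r s) (Ici 1) := by
  have hN := differentiableOn_NT hs hk2 hk3 hk4
  refine hN.div ((differentiableOn_const 1).add hN) fun τ hτ => ?_
  have := NT_nonneg hs hk2 hk3 hk4 hτ
  positivity

lemma tendsto_sq_div_DT (hk3 : 0 < kap3 r s) :
    Tendsto (fun τ => (τ - 1) ^ 2 / DT r s τ) atTop (𝓝 1) := by
  have hlim : Tendsto (fun τ => (1 + 2 * kap3 r s * (τ - 1)⁻¹ + kap3 r s * ((τ - 1)⁻¹) ^ 2)⁻¹)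
      atTop (𝓝 1) := by
    simpa using ((((tendsto_inv_sub_one.const_mul (2 * kap3 r s)).const_add 1).add
      ((tendsto_inv_sub_one.pow 2).const_mul (kap3 r s))).inv₀ (by simp))
  refine hlim.congr' ?_
  filter_upwards [eventually_gt_atTop 1] with τ hτ
  have := (DT_pos hk3 hτ.le).ne'
  have : τ - 1 ≠ 0 := by linarith
  field_simp
  unfold DT
  ring

lemma tendsto_pT (hk3 : 0 < kap3 r s) : Tendsto (pT r s) atTop (𝓝 1) := by
  have hlim := (tendsto_sq_div_DT hk3).mul ((tendsto_inv_sub_one.const_mul (kap3 r s)).const_add 1)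
  rw [mul_zero, add_zero, mul_one] at hlim
  refine hlim.congr' ?_
  filter_upwards [eventually_gt_atTop 1] with τ hτ
  have : τ - 1 ≠ 0 := by linarith
  unfold pT
  field_simp

lemma tendsto_gammaT_factor (hk3 : 0 < kap3 r s) :
    Tendsto (fun τ => kap3 r s * (τ - 1) / DT r s τ) atTop (𝓝 0) := by
  have hlim := (tendsto_sq_div_DT hk3).mul (tendsto_inv_sub_one.const_mul (kap3 r s))
  rw [mul_zero, mul_zero] at hlim
  refine hlim.congr' ?_
  filter_upwards [eventually_gt_atTop 1] with τ hτ
  have : τ - 1 ≠ 0 := by linarith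
  field_simp

lemma tendsto_qT (hk2 : 0 < kap2 r s) (hk3 : 0 < kap3 r s) (hk4 : 0 < kap4 r) :
    Tendsto (qT r s) atTop atTop := by
  have hlim := ((tendsto_id (α := ℝ)).const_mul_atTop (div_pos hk4 hk2)).atTop_mul_pos one_pos
    (tendsto_sq_div_DT hk3)
  refine hlim.congr fun τ => ?_
  simp only [qT_eq, id]

lemma tendsto_NT (hs : 3 ≤ s) (hk2 : 0 < kap2 r s) (hk3 : 0 < kap3 r s) (hk4 : 0 < kap4 r) :
    Tendsto (NT r s) atTop atTop := by
  refine tendsto_atTop_mono' _ ?_ (tendsto_qT hk2 hk3 hk4)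
  filter_upwards [eventually_ge_atTop 1] with τ hτ
  have hc : 0 ≤ (s - 3) / (2 * kap4 r) := div_nonneg (by linarith) (by positivity)
  rw [NT_eq_rootSum]
  exact le_rootSum hc (pT_nonneg hk3 hτ) (qT_nonneg hk2 hk3 hk4 hτ)

lemma one_sub_alphaT {τ : ℝ} (hN : 0 ≤ NT r s τ) : 1 - alphaT r s τ = (1 + NT r s τ)⁻¹ := by
  have : 1 + NT r s τ ≠ 0 := by positivity
  unfold alphaT
  field_simp
  ring

lemma tendsto_one_sub_alphaT (hs : 3 ≤ s) (hk2 : 0 < kap2 r s) (hk3 : 0 < kap3 r s)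
    (hk4 : 0 < kap4 r) : Tendsto (fun τ => 1 - alphaT r s τ) atTop (𝓝 0) := by
  refine (tendsto_atTop_add_const_left _ 1 (tendsto_NT hs hk2 hk3 hk4)).inv_tendsto_atTop.congr' ?_
  filter_upwards [eventually_ge_atTop 1] with τ hτ
  exact (one_sub_alphaT (NT_nonneg hs hk2 hk3 hk4 hτ)).symm

lemma tendsto_deltaT (hs : 3 ≤ s) (hk2 : 0 < kap2 r s) (hk3 : 0 < kap3 r s)
    (hk4 : 0 < kap4 r) :
    Tendsto (deltaT r s) atTop (𝓝 (1 / (1 + (s - 3) / (2 * kap4 r) +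
      √((s - 2) / kap4 r + (s - 3) ^ 2 / (4 * kap4 r ^ 2))))) := by
  have hc : 0 ≤ (s - 3) / (2 * kap4 r) := div_nonneg (by linarith) (by positivity)
  refine (tendsto_div_one_add_rootSum hc (tendsto_pT hk3) (tendsto_qT hk2 hk3 hk4)).congr' ?_
  filter_upwards [eventually_ge_atTop 1] with τ hτ
  rw [deltaT, one_sub_alphaT (NT_nonneg hs hk2 hk3 hk4 hτ), NT_eq_rootSum, div_eq_mul_inv]

lemma tendsto_alphaT (hs : 3 ≤ s) (hk2 : 0 < kap2 r s) (hk3 : 0 < kap3 r s)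
    (hk4 : 0 < kap4 r) : Tendsto (alphaT r s) atTop (𝓝 1) := by
  simpa using (tendsto_const_nhds (x := (1 : ℝ))).sub (tendsto_one_sub_alphaT hs hk2 hk3 hk4)

lemma tendsto_betaT (hs : 3 ≤ s) (hk2 : 0 < kap2 r s) (hk3 : 0 < kap3 r s)
    (hk4 : 0 < kap4 r) : Tendsto (betaT r s) atTop (𝓝 0) := by
  have := (tendsto_pT hk3).mul (tendsto_one_sub_alphaT hs hk2 hk3 hk4)
  rw [mul_zero] at this
  exact this

lemma tendsto_gammaT (hs : 3 ≤ s) (hk2 : 0 < kap2 r s) (hk3 : 0 < kap3 r s)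
    (hk4 : 0 < kap4 r) : Tendsto (gammaT r s) atTop (𝓝 0) := by
  have := (tendsto_gammaT_factor hk3).mul (tendsto_one_sub_alphaT hs hk2 hk3 hk4)
  rw [mul_zero] at this
  exact this

end

/-- For integers `s ≥ 3` and `r ≥ s+1`: `α₁ = 0`; the function `τ ↦ α_τ` is strictly
increasing and differentiable on `[1,∞)`; and as `τ → ∞`, `α_τ → 1`, `β_τ → 0`,
`γ_τ → 0` and `δ_τ → δ_∞ := 1/(1 + (s−3)/(2κ₄) + √((s−2)/κ₄ + (s−3)²/(4κ₄²)))`,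
which lies in `(0,1)`. -/
theorem stmt_16 (r s : ℤ) (hs : 3 ≤ s) (hr : s + 1 ≤ r) :
    alphaT r s 1 = 0 ∧
    StrictMonoOn (alphaT r s) (Set.Ici 1) ∧
    DifferentiableOn ℝ (alphaT r s) (Set.Ici 1) ∧
    Filter.Tendsto (alphaT r s) Filter.atTop (nhds 1) ∧
    Filter.Tendsto (betaT r s) Filter.atTop (nhds 0) ∧
    Filter.Tendsto (gammaT r s) Filter.atTop (nhds 0) ∧
    Filter.Tendsto (deltaT r s) Filter.atTop
      (nhds (1 / (1 + ((s : ℝ) - 3) / (2 * kap4 r) +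
        Real.sqrt (((s : ℝ) - 2) / kap4 r + ((s : ℝ) - 3) ^ 2 / (4 * (kap4 r) ^ 2))))) ∧
    0 < 1 / (1 + ((s : ℝ) - 3) / (2 * kap4 r) +
        Real.sqrt (((s : ℝ) - 2) / kap4 r + ((s : ℝ) - 3) ^ 2 / (4 * (kap4 r) ^ 2))) ∧
    1 / (1 + ((s : ℝ) - 3) / (2 * kap4 r) +
        Real.sqrt (((s : ℝ) - 2) / kap4 r + ((s : ℝ) - 3) ^ 2 / (4 * (kap4 r) ^ 2))) < 1 := by
  have hs' : (3 : ℝ) ≤ s := by exact_mod_cast hs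
  have hr' : (s : ℝ) + 1 ≤ r := by exact_mod_cast hr
  have hk2 := kap2_pos hs' hr'
  have hk3 := kap3_pos hs' hr'
  have hk4 := kap4_pos (by linarith : (3 : ℝ) < r)
  have hc : 0 ≤ ((s : ℝ) - 3) / (2 * kap4 r) := div_nonneg (by linarith) (by positivity)
  have hroot : 0 < √(((s : ℝ) - 2) / kap4 r + ((s : ℝ) - 3) ^ 2 / (4 * kap4 r ^ 2)) :=
    Real.sqrt_pos.2 (add_pos_of_pos_of_nonneg (div_pos (by linarith) hk4) (by positivity))
  refine ⟨alphaT_one, alphaT_strictMonoOn hs' hk2 hk3 hk4, differentiableOn_alphaT hs' hk2 hk3 hk4,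
    tendsto_alphaT hs' hk2 hk3 hk4, tendsto_betaT hs' hk2 hk3 hk4, tendsto_gammaT hs' hk2 hk3 hk4,
    tendsto_deltaT hs' hk2 hk3 hk4, by positivity, ?_⟩
  rw [div_lt_one (by positivity)]
  linarith
end
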